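/- arXiv:1303.6478 — 2 statements merged into one kernel-verified Lean document; each statement's English description precedes it below -/
import Mathlib

section
/- Let σ̃ ∈ S_d be a permutation with a distinguished cycle c of length m = m₁ + m₂, where m₁, m₂ ≥ 1. The number of transpositions τ ∈ S_d such that τ∘σ̃ has cycle type obtained from that of σ̃ by cutting c into two cycles of lengths m₁ and m₂ equals m₁ + m₂ if m₁ ≠ m₂, and equals m₁ if m₁ = m₂. -/
/-!
Let `n = m₁ + m₂` be the length of the cycle `c` of `σ` through `a`, measured as the minimal
period of `a`. For `u ∈ c` and `0 < t < n`, the permutation `swap u (σ^t u) * σ` runs through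
`u, σ u, …, σ^(t-1) u` back to `u`, and through the other `n - t` points of `c` starting from
`σ^t u`; all other cycles are untouched. Conversely, if `τ * σ` cuts `c` into two of its
cycles, then `c` is invariant under `τ * σ` and `σ`, hence under `τ`; so the transposition `τ`
swaps two points of `c` (swapping two points off `c` does not cut it), and the lengths force
them to be `w` and `σ^m₁ w`. Thus `w ↦ swap w (σ^m₁ w)` maps `c` onto the transpositions
counted, and `w ≠ w'` have the same image only if `w' = σ^m₁ w` and `w = σ^m₁ w'`, i.e.
`n ∣ 2 m₁`, i.e. `m₁ = m₂`: the map is injective when `m₁ ≠ m₂` and two-to-one when `m₁ = m₂`.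
-/

/-- The cycle (orbit) of the point `x` under the permutation `σ`. -/
def permOrbit {d : ℕ} (σ : Equiv.Perm (Fin d)) (x : Fin d) : Set (Fin d) :=
  {y | σ.SameCycle x y}

open Function Set

namespace Equiv.Perm

variable {α : Type*}

theorem eq_and_eq_or_eq_and_eq_of_swap_eq_swap [DecidableEq α] {a b c e : α} (hab : a ≠ b)
    (h : swap a b = swap c e) : a = c ∧ b = e ∨ a = e ∧ b = c := by
  have ha := congrArg (· a) h
  have hb := congrArg (· b) h
  simp only [swap_apply_left, swap_apply_right, swap_apply_def] at ha hb
  grind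

section Orbit

variable (f : Perm α) (x : α)

theorem setOf_sameCycle_eq_image_Iio [Finite α] {t : ℕ} (ht : 0 < t) (hx : (f ^ t) x = x) :
    {y | f.SameCycle x y} = (fun s => (f ^ s) x) '' Iio t := by
  ext y
  constructor
  · intro hy
    obtain ⟨k, rfl⟩ := hy.exists_nat_pow_eq
    exact ⟨k % t, Nat.mod_lt k ht, IsPeriodicPt.iterate_mod_apply hx k⟩
  · rintro ⟨s, -, rfl⟩
    exact (SameCycle.refl f x).pow_right

theorem setOf_sameCycle_eq_image_Iio_minimalPeriod [Finite α] :
    {y | f.SameCycle x y} = (fun s => (f ^ s) x) '' Iio (minimalPeriod f x) :=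
  setOf_sameCycle_eq_image_Iio f x
    (minimalPeriod_pos_of_mem_periodicPts (f.injective.mem_periodicPts x)) iterate_minimalPeriod

theorem injOn_pow_apply_Iio_minimalPeriod :
    InjOn (fun s => (f ^ s) x) (Iio (minimalPeriod f x)) :=
  iterate_injOn_Iio_minimalPeriod

theorem ncard_image_pow_apply_Iio {t : ℕ} (ht : t ≤ minimalPeriod f x) :
    ((fun s => (f ^ s) x) '' Iio t).ncard = t := by
  rw [((injOn_pow_apply_Iio_minimalPeriod f x).mono (Iio_subset_Iio ht)).ncard_image,
    ncard_Iio_nat]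

theorem ncard_setOf_sameCycle [Finite α] : {y | f.SameCycle x y}.ncard = minimalPeriod f x := by
  rw [setOf_sameCycle_eq_image_Iio_minimalPeriod, ncard_image_pow_apply_Iio f x le_rfl]

variable {f x}

theorem self_ne_pow_apply {k : ℕ} (hk₀ : k ≠ 0) (hk : k < minimalPeriod f x) :
    x ≠ (f ^ k) x :=
  fun h => not_isPeriodicPt_of_pos_of_lt_minimalPeriod hk₀ hk h.symm

theorem setOf_sameCycle_eq_of_sameCycle {y : α} (h : f.SameCycle x y) :
    {z | f.SameCycle y z} = {z | f.SameCycle x z} :=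
  Set.ext fun _ => ⟨h.trans, h.symm.trans⟩

theorem minimalPeriod_eq_of_sameCycle [Finite α] {y : α} (h : f.SameCycle x y) :
    minimalPeriod f y = minimalPeriod f x := by
  rw [← ncard_setOf_sameCycle, ← ncard_setOf_sameCycle, setOf_sameCycle_eq_of_sameCycle h]

theorem setOf_sameCycle_eq_range [Finite α] :
    {y | f.SameCycle x y} = range fun n : ℕ => (f ^ n) x :=
  Set.ext fun _ =>
    ⟨SameCycle.exists_nat_pow_eq, fun ⟨_, hn⟩ => hn ▸ (SameCycle.refl f x).pow_right⟩

theorem setOf_sameCycle_mul_of_forall [Finite α] {τ : Perm α}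
    (hτ : ∀ y, f.SameCycle x y → τ y = y) :
    {y | (τ * f).SameCycle x y} = {y | f.SameCycle x y} := by
  have hpow : ∀ n : ℕ, ((τ * f) ^ n) x = (f ^ n) x := by
    intro n
    induction n with
    | zero => rfl
    | succ n ih =>
      rw [pow_succ', mul_apply, ih, mul_apply, hτ _ (SameCycle.refl f x).pow_right.apply_right,
        pow_succ', mul_apply]
  rw [setOf_sameCycle_eq_range, setOf_sameCycle_eq_range, funext hpow]

end Orbit

section Cut

variable [DecidableEq α] {f : Perm α} {x : α} {t : ℕ}

theorem pow_apply_swap_mul_of_lt (ht : t < minimalPeriod f x) :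
    ∀ s < t, ((swap x ((f ^ t) x) * f) ^ s) x = (f ^ s) x := by
  intro s hs
  induction s with
  | zero => rfl
  | succ s ih =>
    have hne : ∀ r < minimalPeriod f x, r ≠ s + 1 → (f ^ (s + 1)) x ≠ (f ^ r) x :=
      fun r hr hrs h =>
        hrs ((iterate_eq_iterate_iff_of_lt_minimalPeriod (by omega) hr).1 h).symm
    have h₀ : (f ^ (s + 1)) x ≠ x := hne 0 (by omega) (by omega)
    rw [pow_succ', mul_apply, ih (by omega), mul_apply, ← mul_apply f, ← pow_succ',
      swap_apply_of_ne_of_ne h₀ (hne t ht (by omega))]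

theorem pow_apply_swap_mul_self (ht₀ : 0 < t) (ht : t < minimalPeriod f x) :
    ((swap x ((f ^ t) x) * f) ^ t) x = x := by
  obtain ⟨s, rfl⟩ : ∃ s, t = s + 1 := ⟨t - 1, by omega⟩
  rw [pow_succ', mul_apply, pow_apply_swap_mul_of_lt ht s (by omega), mul_apply, ← mul_apply f,
    ← pow_succ', swap_apply_right]

theorem eq_pow_apply_of_swap_pow_apply_eq {k : ℕ} {w w' : α} (hk₀ : k ≠ 0)
    (hk : k < minimalPeriod f w) (h : swap w ((f ^ k) w) = swap w' ((f ^ k) w'))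
    (hne : w ≠ w') : w = (f ^ k) w' ∧ (f ^ k) w = w' :=
  (eq_and_eq_or_eq_and_eq_of_swap_eq_swap (self_ne_pow_apply hk₀ hk) h).resolve_left
    fun h' => hne h'.1

variable [Finite α]

theorem setOf_sameCycle_swap_mul (ht₀ : 0 < t) (ht : t < minimalPeriod f x) :
    {y | (swap x ((f ^ t) x) * f).SameCycle x y} = (fun s => (f ^ s) x) '' Iio t := by
  rw [setOf_sameCycle_eq_image_Iio _ _ ht₀ (pow_apply_swap_mul_self ht₀ ht)]
  exact image_congr fun s hs => pow_apply_swap_mul_of_lt ht s hs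

theorem setOf_sameCycle_swap_mul_pow_apply (ht₀ : 0 < t) (ht : t < minimalPeriod f x) :
    {y | (swap x ((f ^ t) x) * f).SameCycle ((f ^ t) x) y} =
      (fun s => (f ^ s) ((f ^ t) x)) '' Iio (minimalPeriod f x - t) := by
  have hper : minimalPeriod f ((f ^ t) x) = minimalPeriod f x :=
    minimalPeriod_eq_of_sameCycle (SameCycle.refl f x).pow_right
  have hback : (f ^ (minimalPeriod f x - t)) ((f ^ t) x) = x := by
    rw [← mul_apply, ← pow_add, Nat.sub_add_cancel ht.le]
    exact iterate_minimalPeriod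
  have := setOf_sameCycle_swap_mul (f := f) (x := (f ^ t) x) (t := minimalPeriod f x - t)
    (by omega) (by omega)
  rwa [hback, swap_comm] at this

theorem ncard_setOf_sameCycle_swap_mul (ht₀ : 0 < t) (ht : t < minimalPeriod f x) :
    {y | (swap x ((f ^ t) x) * f).SameCycle x y}.ncard = t := by
  rw [setOf_sameCycle_swap_mul ht₀ ht, ncard_image_pow_apply_Iio f x ht.le]

theorem ncard_setOf_sameCycle_swap_mul_pow_apply (ht₀ : 0 < t) (ht : t < minimalPeriod f x) :
    {y | (swap x ((f ^ t) x) * f).SameCycle ((f ^ t) x) y}.ncard = minimalPeriod f x - t := by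
  rw [setOf_sameCycle_swap_mul_pow_apply ht₀ ht, ncard_image_pow_apply_Iio]
  rw [minimalPeriod_eq_of_sameCycle (SameCycle.refl f x).pow_right]
  omega

theorem not_sameCycle_swap_mul (ht₀ : 0 < t) (ht : t < minimalPeriod f x) :
    ¬ (swap x ((f ^ t) x) * f).SameCycle x ((f ^ t) x) := by
  intro h
  have : (f ^ t) x ∈ (fun s => (f ^ s) x) '' Iio t := setOf_sameCycle_swap_mul ht₀ ht ▸ h
  obtain ⟨s, hs, hst⟩ := this
  exact hs.ne ((iterate_eq_iterate_iff_of_lt_minimalPeriod (hs.trans ht) ht).1 hst)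

theorem setOf_sameCycle_swap_mul_union (ht₀ : 0 < t) (ht : t < minimalPeriod f x) :
    {y | (swap x ((f ^ t) x) * f).SameCycle x y} ∪
      {y | (swap x ((f ^ t) x) * f).SameCycle ((f ^ t) x) y} = {y | f.SameCycle x y} := by
  rw [setOf_sameCycle_swap_mul ht₀ ht, setOf_sameCycle_swap_mul_pow_apply ht₀ ht,
    setOf_sameCycle_eq_image_Iio_minimalPeriod]
  apply Subset.antisymm
  · rintro _ (⟨s, hs : s < t, rfl⟩ | ⟨s, hs : s < minimalPeriod f x - t, rfl⟩)
    · exact ⟨s, mem_Iio.2 (by omega), rfl⟩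
    · refine ⟨s + t, mem_Iio.2 (by omega), ?_⟩
      simp only [pow_add, mul_apply]
  · rintro _ ⟨k, hk : k < minimalPeriod f x, rfl⟩
    by_cases hkt : k < t
    · exact Or.inl ⟨k, hkt, rfl⟩
    · refine Or.inr ⟨k - t, mem_Iio.2 (by omega), ?_⟩
      simp only [← mul_apply, ← pow_add, Nat.sub_add_cancel (not_lt.1 hkt)]

end Cut

section Cutting

variable [Finite α] [DecidableEq α] {f : Perm α} {a : α} {m₁ m₂ : ℕ}

def CutsCycle (f τ : Perm α) (a : α) (m₁ m₂ : ℕ) : Prop :=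
  ∃ p ∈ {y | f.SameCycle a y}, ∃ q ∈ {y | f.SameCycle a y},
    ¬ (τ * f).SameCycle p q ∧
    {y | (τ * f).SameCycle p y} ∪ {y | (τ * f).SameCycle q y} = {y | f.SameCycle a y} ∧
    {y | (τ * f).SameCycle p y}.ncard = m₁ ∧ {y | (τ * f).SameCycle q y}.ncard = m₂ ∧
    ∀ x, x ∉ {y | f.SameCycle a y} → {y | (τ * f).SameCycle x y} = {y | f.SameCycle x y}

theorem cutsCycle_swap_pow (h₁ : 1 ≤ m₁) (h₂ : 1 ≤ m₂) (hper : minimalPeriod f a = m₁ + m₂)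
    {w : α} (hw : f.SameCycle a w) : CutsCycle f (swap w ((f ^ m₁) w)) a m₁ m₂ := by
  have hperw : minimalPeriod f w = m₁ + m₂ := (minimalPeriod_eq_of_sameCycle hw).trans hper
  have ht : m₁ < minimalPeriod f w := by omega
  have hw' : f.SameCycle a ((f ^ m₁) w) := hw.pow_right
  refine ⟨w, hw, (f ^ m₁) w, hw', not_sameCycle_swap_mul h₁ ht, ?_,
    ncard_setOf_sameCycle_swap_mul h₁ ht, ?_, fun z hz => setOf_sameCycle_mul_of_forall ?_⟩
  · rw [setOf_sameCycle_swap_mul_union h₁ ht, setOf_sameCycle_eq_of_sameCycle hw]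
  · rw [ncard_setOf_sameCycle_swap_mul_pow_apply h₁ ht]
    omega
  · intro y hy
    apply swap_apply_of_ne_of_ne <;> rintro rfl
    exacts [hz (hw.trans hy.symm), hz (hw'.trans hy.symm)]

theorem exists_eq_swap_pow_of_cutsCycle (h₂ : 1 ≤ m₂) (hper : minimalPeriod f a = m₁ + m₂)
    {τ : Perm α} (hτ : τ.IsSwap) (hcut : CutsCycle f τ a m₁ m₂) :
    ∃ w, f.SameCycle a w ∧ τ = swap w ((f ^ m₁) w) := by
  obtain ⟨u, v, huv, rfl⟩ := hτ
  obtain ⟨p, hp, q, -, -, hun, hp₁, -, -⟩ := hcut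
  -- `swap u v = (swap u v * f) * f⁻¹`, and the cycle of `a` is a union of cycles of both factors
  have hmaps : ∀ z, f.SameCycle a z → f.SameCycle a (swap u v z) := by
    intro z hz
    have hz' : f⁻¹ z ∈ {y | (swap u v * f).SameCycle p y} ∪ {y | (swap u v * f).SameCycle q y} :=
      hun ▸ hz.symm_apply_right
    have hg : (swap u v * f) (f⁻¹ z) = swap u v z := by simp
    change swap u v z ∈ {y | f.SameCycle a y}
    rw [← hun, ← hg]
    exact hz'.imp SameCycle.apply_right SameCycle.apply_right
  by_cases hu : f.SameCycle a u
  · have hv : f.SameCycle a v := by simpa using hmaps u hu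
    have hperu : minimalPeriod f u = m₁ + m₂ := (minimalPeriod_eq_of_sameCycle hu).trans hper
    obtain ⟨t, ht : t < minimalPeriod f u, rfl⟩ :
        v ∈ (fun s => (f ^ s) u) '' Iio (minimalPeriod f u) := by
      rw [← setOf_sameCycle_eq_image_Iio_minimalPeriod]
      exact hu.symm.trans hv
    have ht₀ : 0 < t := Nat.pos_of_ne_zero (by rintro rfl; exact huv rfl)
    have hpu : p ∈ {y | f.SameCycle u y} := hu.symm.trans hp
    rw [← setOf_sameCycle_swap_mul_union ht₀ ht] at hpu
    rcases hpu with hpu | hpv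
    · rw [setOf_sameCycle_eq_of_sameCycle hpu, ncard_setOf_sameCycle_swap_mul ht₀ ht] at hp₁
      exact ⟨u, hu, by rw [hp₁]⟩
    · rw [setOf_sameCycle_eq_of_sameCycle hpv, ncard_setOf_sameCycle_swap_mul_pow_apply ht₀ ht]
        at hp₁
      refine ⟨(f ^ t) u, hv, ?_⟩
      rw [← hp₁, ← mul_apply, ← pow_add, Nat.sub_add_cancel ht.le, swap_comm]
      exact congrArg _ iterate_minimalPeriod.symm
  · have hv : ¬ f.SameCycle a v := fun hv => hu (by simpa using hmaps v hv)
    have hfix : ∀ y, f.SameCycle p y → swap u v y = y := fun y hy =>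
      swap_apply_of_ne_of_ne (by rintro rfl; exact hu (hp.trans hy))
        (by rintro rfl; exact hv (hp.trans hy))
    rw [setOf_sameCycle_mul_of_forall hfix, ncard_setOf_sameCycle,
      minimalPeriod_eq_of_sameCycle hp, hper] at hp₁
    omega

theorem setOf_isSwap_and_cutsCycle (h₁ : 1 ≤ m₁) (h₂ : 1 ≤ m₂)
    (hper : minimalPeriod f a = m₁ + m₂) :
    {τ : Perm α | τ.IsSwap ∧ CutsCycle f τ a m₁ m₂} =
      (fun w => swap w ((f ^ m₁) w)) '' {y | f.SameCycle a y} := by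
  ext τ
  constructor
  · rintro ⟨hτ, hcut⟩
    obtain ⟨w, hw, rfl⟩ := exists_eq_swap_pow_of_cutsCycle h₂ hper hτ hcut
    exact ⟨w, hw, rfl⟩
  · rintro ⟨w, hw, rfl⟩
    have hne : w ≠ (f ^ m₁) w :=
      self_ne_pow_apply (by omega) (by rw [minimalPeriod_eq_of_sameCycle hw, hper]; omega)
    exact ⟨⟨w, _, hne, rfl⟩, cutsCycle_swap_pow h₁ h₂ hper hw⟩

theorem injOn_swap_pow (h₁ : 1 ≤ m₁) (h₂ : 1 ≤ m₂) (hne : m₁ ≠ m₂)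
    (hper : minimalPeriod f a = m₁ + m₂) :
    InjOn (fun w => swap w ((f ^ m₁) w)) {y | f.SameCycle a y} := by
  intro w hw w' _ h
  by_contra hww'
  have hperw : minimalPeriod f w = m₁ + m₂ := (minimalPeriod_eq_of_sameCycle hw).trans hper
  obtain ⟨hw₁, hw₂⟩ := eq_pow_apply_of_swap_pow_apply_eq (by omega) (by omega) h hww'
  have hdvd : m₁ + m₂ ∣ m₁ + m₁ := by
    rw [← hperw]
    apply IsPeriodicPt.minimalPeriod_dvd
    change (f ^ (m₁ + m₁)) w = w
    rw [pow_add, mul_apply, hw₂, ← hw₁]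
  have := Nat.eq_of_dvd_of_lt_two_mul (by omega) hdvd (by omega)
  omega

theorem image_swap_pow_eq_image_Iio (hper : minimalPeriod f a = m₁ + m₁) :
    (fun w => swap w ((f ^ m₁) w)) '' {y | f.SameCycle a y} =
      (fun w => swap w ((f ^ m₁) w)) '' ((fun s => (f ^ s) a) '' Iio m₁) := by
  have hfix : (f ^ (m₁ + m₁)) a = a := hper ▸ iterate_minimalPeriod
  rw [setOf_sameCycle_eq_image_Iio_minimalPeriod, hper]
  apply Subset.antisymm
  · rintro _ ⟨_, ⟨s, hs : s < m₁ + m₁, rfl⟩, rfl⟩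
    by_cases hs₁ : s < m₁
    · exact ⟨_, ⟨s, hs₁, rfl⟩, rfl⟩
    · refine ⟨_, ⟨s - m₁, mem_Iio.2 (by omega), rfl⟩, ?_⟩
      have h₁ : (f ^ m₁) ((f ^ (s - m₁)) a) = (f ^ s) a := by
        rw [← mul_apply, ← pow_add, Nat.add_sub_cancel' (by omega)]
      have h₂ : (f ^ m₁) ((f ^ s) a) = (f ^ (s - m₁)) a := by
        rw [← mul_apply, ← pow_add, show m₁ + s = s - m₁ + (m₁ + m₁) by omega, pow_add,
          mul_apply, hfix]
      simp only [h₁, h₂, swap_comm]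
  · exact image_mono (image_mono (Iio_subset_Iio (by omega)))

theorem injOn_swap_pow_image_Iio (h₁ : 1 ≤ m₁) (hper : minimalPeriod f a = m₁ + m₁) :
    InjOn (fun w => swap w ((f ^ m₁) w)) ((fun s => (f ^ s) a) '' Iio m₁) := by
  rintro _ ⟨i, hi : i < m₁, rfl⟩ _ ⟨j, hj : j < m₁, rfl⟩ h
  dsimp only at h
  by_contra hij
  have hperi : minimalPeriod f ((f ^ i) a) = m₁ + m₁ :=
    (minimalPeriod_eq_of_sameCycle (SameCycle.refl f a).pow_right).trans hper
  obtain ⟨h', -⟩ := eq_pow_apply_of_swap_pow_apply_eq (by omega) (by omega) h hij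
  rw [← mul_apply, ← pow_add] at h'
  have := (iterate_eq_iterate_iff_of_lt_minimalPeriod (f := f) (x := a) (by omega)
    (by omega)).1 h'
  omega

theorem ncard_image_swap_pow (h₁ : 1 ≤ m₁) (h₂ : 1 ≤ m₂)
    (hper : minimalPeriod f a = m₁ + m₂) :
    ((fun w => swap w ((f ^ m₁) w)) '' {y | f.SameCycle a y}).ncard =
      if m₁ = m₂ then m₁ else m₁ + m₂ := by
  split_ifs with h
  · subst h
    rw [image_swap_pow_eq_image_Iio hper, (injOn_swap_pow_image_Iio h₁ hper).ncard_image,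
      ncard_image_pow_apply_Iio f a (by omega)]
  · rw [(injOn_swap_pow h₁ h₂ h hper).ncard_image, ncard_setOf_sameCycle, hper]

end Cutting

end Equiv.Perm

/-- Let `σ̃ ∈ S_d` have a distinguished cycle `c ∋ a` of length
`m = m₁ + m₂` with `m₁, m₂ ≥ 1`.  The number of transpositions `τ` such that `τ ∘ σ̃` has
the cycle type of `σ̃` with `c` cut into two cycles of lengths `m₁` and `m₂` (all other
cycles unchanged) equals `m₁ + m₂` if `m₁ ≠ m₂, and `m₁` if `m₁ = m₂`. -/
theorem count_transpositions_cutting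
    {d : ℕ} (σ : Equiv.Perm (Fin d)) (a : Fin d) (m₁ m₂ : ℕ)
    (h₁ : 1 ≤ m₁) (h₂ : 1 ≤ m₂)
    (hm : (permOrbit σ a).ncard = m₁ + m₂) :
    {τ : Equiv.Perm (Fin d) | τ.IsSwap ∧
      ∃ p ∈ permOrbit σ a, ∃ q ∈ permOrbit σ a,
        ¬ (τ * σ).SameCycle p q ∧
        permOrbit (τ * σ) p ∪ permOrbit (τ * σ) q = permOrbit σ a ∧
        (permOrbit (τ * σ) p).ncard = m₁ ∧ (permOrbit (τ * σ) q).ncard = m₂ ∧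
        ∀ x : Fin d, x ∉ permOrbit σ a → permOrbit (τ * σ) x = permOrbit σ x}.ncard
      = if m₁ = m₂ then m₁ else m₁ + m₂ := by
  have hper : Function.minimalPeriod σ a = m₁ + m₂ :=
    (Equiv.Perm.ncard_setOf_sameCycle σ a).symm.trans hm
  change {τ | τ.IsSwap ∧ Equiv.Perm.CutsCycle σ τ a m₁ m₂}.ncard = _
  rw [Equiv.Perm.setOf_isSwap_and_cutsCycle h₁ h₂ hper,
    Equiv.Perm.ncard_image_swap_pow h₁ h₂ hper]
end

section
/- Let d ≥ 1 and let τ, σ_u, σ_v, σ_w ∈ S_d with τ a transposition. Write τ = (τ₁ τ₂) and suppose τ₁ and τ₂ lie in two distinct cycles of σ_u (so that σ̃ := τ∘σ_u joins these two cycles into one). If the subgroup ⟨τ, σ_u, σ_v, σ_w⟩ acts transitively on {1,…,d}, then the subgroup ⟨τ∘σ_u, σ_v, σ_w⟩ also acts transitively on {1,…,d}. -/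
/-!
Let `H = ⟨τσ_u, σ_v, σ_w⟩` and let `K` be the group of all permutations that map every point into
its own `H`-orbit. Since `τσ_u` joins the cycles of `σ_u` through `τ₁` and `τ₂`, these two points
lie in one `H`-orbit, so `τ ∈ K`; hence also `σ_u = τ · τσ_u ∈ K`. Thus `⟨τ, σ_u, σ_v, σ_w⟩ ≤ K`,
and every orbit of the larger group is contained in an orbit of `H`.
-/

open Equiv Equiv.Perm

namespace Equiv.Perm

variable {α : Type*} [DecidableEq α]

theorem sameCycle_swap_mul_of_not_sameCycle [Finite α] {σ : Perm α} {a b : α}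
    (hab : ¬σ.SameCycle a b) : (swap a b * σ).SameCycle a b := by
  set π := swap a b * σ
  -- `π` agrees with `σ` along the `σ`-cycle of `b`, except that `σ.symm b ↦ a`.
  have hpow : ∀ m : ℕ, π.SameCycle b ((σ ^ m) b) := by
    intro m
    induction m with
    | zero => exact SameCycle.refl π b
    | succ m ih =>
      have hne_a : σ ((σ ^ m) b) ≠ a := fun h =>
        hab (SameCycle.symm ⟨(m + 1 : ℕ), by rw [zpow_natCast, pow_succ', mul_apply, h]⟩)
      rw [pow_succ', mul_apply]
      by_cases hb : σ ((σ ^ m) b) = b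
      · rw [hb]
      · have hπ : π ((σ ^ m) b) = σ ((σ ^ m) b) := by
          rw [mul_apply, swap_apply_of_ne_of_ne hne_a hb]
        rw [← hπ]
        exact sameCycle_apply_right.mpr ih
  obtain ⟨m, hm⟩ := (sameCycle_symm_apply_right.mpr (SameCycle.refl σ b)).exists_nat_pow_eq
  have hπ : π (σ.symm b) = a := by rw [mul_apply, apply_symm_apply, swap_apply_right]
  rw [sameCycle_comm, ← hπ, sameCycle_apply_right, ← hm]
  exact hpow m

end Equiv.Perm

namespace Subgroup

variable {G α : Type*} [Group G] [MulAction G α]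

variable (α) in
def orbitPreserving (H : Subgroup G) : Subgroup G where
  carrier := {g | ∀ x : α, ∃ h ∈ H, h • x = g • x}
  one_mem' x := ⟨1, H.one_mem, rfl⟩
  mul_mem' {g₁ g₂} hg₁ hg₂ x := by
    obtain ⟨h₂, hh₂, e₂⟩ := hg₂ x
    obtain ⟨h₁, hh₁, e₁⟩ := hg₁ (g₂ • x)
    exact ⟨h₁ * h₂, H.mul_mem hh₁ hh₂, by rw [mul_smul, e₂, e₁, mul_smul]⟩
  inv_mem' {g} hg x := by
    obtain ⟨h, hh, e⟩ := hg (g⁻¹ • x)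
    rw [smul_inv_smul] at e
    exact ⟨h⁻¹, H.inv_mem hh, inv_smul_eq_iff.mpr e.symm⟩

variable (α) in
theorem le_orbitPreserving (H : Subgroup G) : H ≤ H.orbitPreserving α :=
  fun g hg _ => ⟨g, hg, rfl⟩

end Subgroup

open Subgroup

theorem Equiv.swap_mem_orbitPreserving {α : Type*} [DecidableEq α] {H : Subgroup (Perm α)}
    {a b : α} (hab : ∃ h ∈ H, h a = b) : swap a b ∈ H.orbitPreserving α := by
  obtain ⟨h, hh, rfl⟩ := hab
  intro x
  rcases eq_or_ne x a with rfl | hxa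
  · exact ⟨h, hh, by rw [Perm.smul_def, Perm.smul_def, swap_apply_left]⟩
  rcases eq_or_ne x (h a) with rfl | hxb
  · exact ⟨h⁻¹, H.inv_mem hh, by
      rw [Perm.smul_def (swap _ _), swap_apply_right, ← Perm.smul_def, inv_smul_smul]⟩
  · exact ⟨1, H.one_mem, by rw [one_smul, Perm.smul_def, swap_apply_of_ne_of_ne hxa hxb]⟩

theorem transitivity_after_join_general
    {d : ℕ} (σu σv σw : Equiv.Perm (Fin d)) (t₁ t₂ : Fin d)
    (hcyc : ¬ σu.SameCycle t₁ t₂)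
    (htrans : ∀ k l : Fin d,
      ∃ g ∈ Subgroup.closure
        ({Equiv.swap t₁ t₂, σu, σv, σw} : Set (Equiv.Perm (Fin d))), g k = l) :
    ∀ k l : Fin d,
      ∃ g ∈ Subgroup.closure
        ({Equiv.swap t₁ t₂ * σu, σv, σw} : Set (Equiv.Perm (Fin d))), g k = l := by
  set H := closure ({swap t₁ t₂ * σu, σv, σw} : Set (Perm (Fin d)))
  have hH : H ≤ H.orbitPreserving (Fin d) := le_orbitPreserving _ H
  have hjoin : swap t₁ t₂ * σu ∈ H := subset_closure (by simp)
  have hswap : swap t₁ t₂ ∈ H.orbitPreserving (Fin d) := by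
    obtain ⟨i, hi⟩ := sameCycle_swap_mul_of_not_sameCycle hcyc
    exact swap_mem_orbitPreserving ⟨_, zpow_mem hjoin i, hi⟩
  have hσu : σu ∈ H.orbitPreserving (Fin d) := by
    simpa only [← mul_assoc, swap_mul_self, one_mul] using mul_mem hswap (hH hjoin)
  have hle : closure ({swap t₁ t₂, σu, σv, σw} : Set (Perm (Fin d))) ≤
      H.orbitPreserving (Fin d) := by
    simp only [closure_le, Set.insert_subset_iff, Set.singleton_subset_iff]
    exact ⟨hswap, hσu, hH (subset_closure (by simp)), hH (subset_closure (by simp))⟩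
  intro k l
  obtain ⟨g, hg, rfl⟩ := htrans k l
  exact hle hg k

/-- Let `τ = (τ₁ τ₂)` be a transposition whose entries lie in two
distinct cycles of `σ_u` (so that `τ ∘ σ_u` joins these two cycles into one).  If
`⟨τ, σ_u, σ_v, σ_w⟩` acts transitively on `{1, …, d}`, then so does
`⟨τ ∘ σ_u, σ_v, σ_w⟩`. -/
theorem transitivity_after_join
    {d : ℕ} (hd : 1 ≤ d) (σu σv σw : Equiv.Perm (Fin d)) (t₁ t₂ : Fin d)
    (hne : t₁ ≠ t₂) (hcyc : ¬ σu.SameCycle t₁ t₂)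
    (htrans : ∀ k l : Fin d,
      ∃ g ∈ Subgroup.closure
        ({Equiv.swap t₁ t₂, σu, σv, σw} : Set (Equiv.Perm (Fin d))), g k = l) :
    ∀ k l : Fin d,
      ∃ g ∈ Subgroup.closure
        ({Equiv.swap t₁ t₂ * σu, σv, σw} : Set (Equiv.Perm (Fin d))), g k = l :=
  transitivity_after_join_general σu σv σw t₁ t₂ hcyc htrans
end
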